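/- Let n ≥ 2 be an integer and let (ξ_i)_{i≥1} be i.i.d. random variables with the Binomial(n, 1/n) distribution. Set S_0 = 1 and S_t = 1 + Σ_{i=1}^{t}(ξ_i − 1), fix an integer H with 2 ≤ H ≤ n, and let γ = min{t ≥ 1 : S_t ≥ H or S_t = 0}. Then E[S_γ² | S_γ ≥ H] ≤ H² + 3H. -/

import Mathlib

/-
On the event `H ≤ S_γ` there are a time `t` and a level `c` with `c + 2 ≤ H` such that the walk
stays in `(0, H)` up to time `t`, `S_t = c + 1` and `ξ_{t+1} ≥ H - c`; then `γ = t + 1` and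
`S_γ = c + ξ_{t+1}`. The first two conditions only involve `ξ_0, …, ξ_t`, which are independent
of `ξ_{t+1} ~ Bin(n, 1/n)`, so on each such piece it suffices to bound `E[(c + ξ)²; ξ ≥ H - c]`
by `(H² + 3H) P(ξ ≥ H - c)`. From `k = 2` on, the binomial weights drop at least by a factor `3`
per step, so the overshoot `j = ξ - (H - c)` carries weights dominated by `3^{-j}`; now
`(H + j)² ≤ H² + H (j² + 2j)` and `∑ (j² + 2j) 3^{-j} = 3`.
-/

open MeasureTheory ProbabilityTheory Set
open scoped ENNReal

/-- The Binomial(n,p) distribution, as a measure on `ℕ`. -/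
noncomputable def binomialMeasure (n : ℕ) (p : ℝ) : Measure ℕ :=
  Measure.sum fun k : ℕ =>
    (ENNReal.ofReal ((n.choose k : ℝ) * p ^ k * (1 - p) ^ (n - k))) • Measure.dirac k

/-- The random walk `S_t = 1 + ∑_{i=1}^t (ξ_i - 1)`. -/
def walk {Ω : Type*} (ξ : ℕ → Ω → ℕ) (t : ℕ) (ω : Ω) : ℤ :=
  1 + ∑ i ∈ Finset.Icc 1 t, ((ξ i ω : ℤ) - 1)

/-- The stopping time `γ = min {t ≥ 1 : S_t ≥ H or S_t = 0}`. -/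
noncomputable def hitTime {Ω : Type*} (ξ : ℕ → Ω → ℕ) (H : ℕ) (ω : Ω) : ℕ :=
  sInf {t | 1 ≤ t ∧ ((H : ℤ) ≤ walk ξ t ω ∨ walk ξ t ω = 0)}

section GeometricDecay

lemma hasSum_sq_add_two_mul_mul_one_third_pow :
    HasSum (fun j : ℕ => ((j : ℝ) ^ 2 + 2 * j) * (1 / 3) ^ j) 3 := by
  have hr : ‖(1 / 3 : ℝ)‖ < 1 := by norm_num
  -- `j² + 2j = 2 (j + 2).choose 2 - (j + 1).choose 1 - j.choose 0`
  have h := ((hasSum_choose_mul_geometric_of_norm_lt_one 2 hr).mul_left 2).sub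
    ((hasSum_choose_mul_geometric_of_norm_lt_one 1 hr).add
      (hasSum_choose_mul_geometric_of_norm_lt_one 0 hr))
  norm_num at h
  refine h.congr_fun fun j => ?_
  rw [Nat.cast_choose_two]
  push_cast
  ring

lemma tsum_sq_add_two_mul_mul_inv_three_pow :
    ∑' j : ℕ, ((j ^ 2 + 2 * j : ℕ) : ℝ≥0∞) * 3⁻¹ ^ j = 3 := by
  have h := hasSum_sq_add_two_mul_mul_one_third_pow
  calc ∑' j : ℕ, ((j ^ 2 + 2 * j : ℕ) : ℝ≥0∞) * 3⁻¹ ^ j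
      = ∑' j : ℕ, ENNReal.ofReal (((j : ℝ) ^ 2 + 2 * j) * (1 / 3) ^ j) := by
        congr 1 with j
        rw [ENNReal.ofReal_mul (by positivity), ENNReal.ofReal_pow (by norm_num), one_div,
          ENNReal.ofReal_inv_of_pos (by norm_num)]
        norm_cast
    _ = 3 := by
        rw [← ENNReal.ofReal_tsum_of_nonneg (fun j => by positivity) h.summable, h.tsum_eq]
        norm_num

variable {ρ : Measure ℕ}

lemma measure_singleton_le_of_three_mul_le (hρ : ∀ j, 3 * ρ {j + 1} ≤ ρ {j}) (j : ℕ) :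
    ρ {j} ≤ ρ {0} * 3⁻¹ ^ j := by
  induction j with
  | zero => simp
  | succ j ih =>
    calc ρ {j + 1} = 3⁻¹ * (3 * ρ {j + 1}) := by
          rw [← mul_assoc, ENNReal.inv_mul_cancel (by norm_num) (by norm_num), one_mul]
      _ ≤ 3⁻¹ * (ρ {0} * 3⁻¹ ^ j) := mul_le_mul_right ((hρ j).trans ih) _
      _ = ρ {0} * 3⁻¹ ^ (j + 1) := by ring

lemma lintegral_sq_add_two_mul_le_of_three_mul_le (hρ : ∀ j, 3 * ρ {j + 1} ≤ ρ {j}) :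
    ∫⁻ j, ((j ^ 2 + 2 * j : ℕ) : ℝ≥0∞) ∂ρ ≤ 3 * ρ univ :=
  calc ∫⁻ j, ((j ^ 2 + 2 * j : ℕ) : ℝ≥0∞) ∂ρ
      = ∑' j : ℕ, ((j ^ 2 + 2 * j : ℕ) : ℝ≥0∞) * ρ {j} := lintegral_countable' _
    _ ≤ ∑' j : ℕ, ((j ^ 2 + 2 * j : ℕ) : ℝ≥0∞) * (ρ {0} * 3⁻¹ ^ j) :=
        ENNReal.tsum_le_tsum fun j =>
          mul_le_mul_right (measure_singleton_le_of_three_mul_le hρ j) _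
    _ = 3 * ρ {0} := by
        simp_rw [mul_left_comm _ (ρ {0})]
        rw [ENNReal.tsum_mul_left, tsum_sq_add_two_mul_mul_inv_three_pow, mul_comm]
    _ ≤ 3 * ρ univ := mul_le_mul_right (measure_mono (subset_univ _)) _

lemma lintegral_add_sq_le_of_three_mul_le (hρ : ∀ j, 3 * ρ {j + 1} ≤ ρ {j}) {a : ℕ}
    (ha : 1 ≤ a) :
    ∫⁻ j, ((a + j : ℕ) : ℝ≥0∞) ^ 2 ∂ρ ≤ ((a ^ 2 + 3 * a : ℕ) : ℝ≥0∞) * ρ univ := by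
  have hpt : ∀ j : ℕ,
      ((a + j : ℕ) : ℝ≥0∞) ^ 2 ≤ (a ^ 2 : ℕ) + a * ((j ^ 2 + 2 * j : ℕ) : ℝ≥0∞) := by
    intro j
    norm_cast
    nlinarith [Nat.mul_le_mul_right (j ^ 2) ha]
  calc ∫⁻ j, ((a + j : ℕ) : ℝ≥0∞) ^ 2 ∂ρ
      ≤ ∫⁻ j, ((a ^ 2 : ℕ) + a * ((j ^ 2 + 2 * j : ℕ) : ℝ≥0∞)) ∂ρ := lintegral_mono hpt
    _ = (a ^ 2 : ℕ) * ρ univ + a * ∫⁻ j, ((j ^ 2 + 2 * j : ℕ) : ℝ≥0∞) ∂ρ := by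
        rw [lintegral_add_left measurable_const, lintegral_const_mul _ (by fun_prop),
          lintegral_const]
    _ ≤ (a ^ 2 : ℕ) * ρ univ + a * (3 * ρ univ) := by
        gcongr
        exact lintegral_sq_add_two_mul_le_of_three_mul_le hρ
    _ = ((a ^ 2 + 3 * a : ℕ) : ℝ≥0∞) * ρ univ := by push_cast; ring

lemma setLIntegral_Ici_add_sq_le {ν : Measure ℕ} {m : ℕ}
    (hν : ∀ k, m ≤ k → 3 * ν {k + 1} ≤ ν {k}) {c : ℕ} (hcm : 1 ≤ c + m) :
    ∫⁻ k in Ici m, ((c + k : ℕ) : ℝ≥0∞) ^ 2 ∂ν ≤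
      (((c + m) ^ 2 + 3 * (c + m) : ℕ) : ℝ≥0∞) * ν (Ici m) := by
  set ρ := (ν.restrict (Ici m)).map (· - m)
  have hρ : ∀ j, ρ {j} = ν {m + j} := by
    intro j
    rw [Measure.map_apply measurable_from_nat (measurableSet_singleton j),
      Measure.restrict_apply MeasurableSet.of_discrete]
    congr 1
    ext k
    simp only [mem_inter_iff, mem_preimage, mem_singleton_iff, mem_Ici]
    omega
  have hρ_univ : ρ univ = ν (Ici m) := by
    rw [Measure.map_apply measurable_from_nat MeasurableSet.univ, preimage_univ,
      Measure.restrict_apply_univ]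
  calc ∫⁻ k in Ici m, ((c + k : ℕ) : ℝ≥0∞) ^ 2 ∂ν
      = ∫⁻ k in Ici m, ((c + m + (k - m) : ℕ) : ℝ≥0∞) ^ 2 ∂ν := by
        refine setLIntegral_congr_fun measurableSet_Ici fun k (hk : m ≤ k) => ?_
        rw [add_assoc, Nat.add_sub_cancel' hk]
    _ = ∫⁻ j, ((c + m + j : ℕ) : ℝ≥0∞) ^ 2 ∂ρ :=
        (lintegral_map (f := fun j => ((c + m + j : ℕ) : ℝ≥0∞) ^ 2) measurable_from_nat
          measurable_from_nat).symm
    _ ≤ _ := by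
        rw [← hρ_univ]
        refine lintegral_add_sq_le_of_three_mul_le (fun j => ?_) hcm
        rw [hρ, hρ, ← add_assoc]
        exact hν _ (Nat.le_add_right m j)

end GeometricDecay

section Binomial

lemma binomialMeasure_singleton (n : ℕ) (p : ℝ) (k : ℕ) :
    binomialMeasure n p {k} = ENNReal.ofReal (n.choose k * p ^ k * (1 - p) ^ (n - k)) := by
  simp [binomialMeasure, Measure.sum_apply _ (measurableSet_singleton k), Pi.single_apply]

lemma Nat.three_mul_choose_succ_le {n k : ℕ} (hk : 2 ≤ k) :
    3 * n.choose (k + 1) ≤ n.choose k * (n - 1) := by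
  rcases lt_or_ge k n with hkn | hnk
  · refine Nat.le_of_mul_le_mul_right ?_ (Nat.succ_pos k)
    calc 3 * n.choose (k + 1) * (k + 1) = n.choose k * (3 * (n - k)) := by
          rw [mul_assoc, Nat.choose_succ_right_eq]; ring
      _ ≤ n.choose k * ((k + 1) * (n - 1)) :=
          Nat.mul_le_mul_left _ (Nat.mul_le_mul (by omega) (by omega))
      _ = n.choose k * (n - 1) * (k + 1) := by ring
  · simp [Nat.choose_eq_zero_of_lt (Nat.lt_succ_of_le hnk)]

lemma three_mul_binomialMeasure_succ_le (n : ℕ) {k : ℕ} (hk : 2 ≤ k) :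
    3 * binomialMeasure n (1 / n) {k + 1} ≤ binomialMeasure n (1 / n) {k} := by
  rw [binomialMeasure_singleton, binomialMeasure_singleton, ← ENNReal.ofReal_ofNat 3,
    ← ENNReal.ofReal_mul (by norm_num)]
  refine ENNReal.ofReal_le_ofReal ?_
  have hq := Nat.one_sub_one_div_cast_nonneg (α := ℝ) n
  rcases lt_or_ge k n with hkn | hnk
  · obtain ⟨e, he⟩ : ∃ e, n - k = e + 1 := ⟨n - (k + 1), by omega⟩
    have hn : (n : ℝ) ≠ 0 := by exact_mod_cast (by omega : n ≠ 0)
    have hchoose : 3 * (n.choose (k + 1) : ℝ) ≤ n.choose k * (n - 1) := by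
      have hcast : ((n - 1 : ℕ) : ℝ) = n - 1 := by rw [Nat.cast_sub (by omega), Nat.cast_one]
      rw [← hcast]
      exact_mod_cast Nat.three_mul_choose_succ_le hk
    rw [he, show n - (k + 1) = e by omega, pow_succ, pow_succ]
    calc 3 * ((n.choose (k + 1) : ℝ) * ((1 / n) ^ k * (1 / n)) * (1 - 1 / n) ^ e)
        = (3 * n.choose (k + 1)) / n * ((1 / n) ^ k * (1 - 1 / n) ^ e) := by ring
      _ ≤ (n.choose k * (n - 1)) / n * ((1 / n) ^ k * (1 - 1 / n) ^ e) := by gcongr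
      _ = n.choose k * (1 / n) ^ k * ((1 - 1 / n) ^ e * (1 - 1 / n)) := by field_simp
  · rw [Nat.choose_eq_zero_of_lt (Nat.lt_succ_of_le hnk), Nat.cast_zero, zero_mul, zero_mul,
      mul_zero]
    positivity

end Binomial

section Independence

lemma ProbabilityTheory.Indep.setLIntegral_inter_preimage {Ω β : Type*}
    {m mΩ : MeasurableSpace Ω} [MeasurableSpace β] {μ : Measure Ω} {X : Ω → β}
    (hind : Indep m (MeasurableSpace.comap X inferInstance) μ) (hm : m ≤ mΩ) (hX : Measurable X)
    {B : Set Ω} (hB : MeasurableSet[m] B) {C : Set β} (hC : MeasurableSet C) {g : β → ℝ≥0∞}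
    (hg : Measurable g) :
    ∫⁻ ω in B ∩ X ⁻¹' C, g (X ω) ∂μ = μ B * ∫⁻ y in C, g y ∂(μ.map X) :=
  calc ∫⁻ ω in B ∩ X ⁻¹' C, g (X ω) ∂μ
      = ∫⁻ ω, B.indicator 1 ω * C.indicator g (X ω) ∂μ := by
        rw [← lintegral_indicator ((hm _ hB).inter (hX hC))]
        congr with ω
        by_cases hω : ω ∈ B <;> by_cases hXω : X ω ∈ C <;> simp [hω, hXω]
    _ = (∫⁻ ω, B.indicator 1 ω ∂μ) * ∫⁻ ω, C.indicator g (X ω) ∂μ :=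
        lintegral_mul_eq_lintegral_mul_lintegral_of_independent_measurableSpace hm hX.comap_le
          hind (Measurable.indicator (m := m) measurable_const hB)
          ((hg.indicator hC).comp (comap_measurable X))
    _ = μ B * ∫⁻ y in C, g y ∂(μ.map X) := by
        rw [lintegral_indicator_one (hm _ hB), ← lintegral_map (hg.indicator hC) hX,
          lintegral_indicator hC]

lemma ProbabilityTheory.iIndepFun.indep_natural_comap_succ {Ω β : Type*} [MeasurableSpace Ω]
    [TopologicalSpace β] [TopologicalSpace.MetrizableSpace β] [MeasurableSpace β] [BorelSpace β]
    {μ : Measure Ω} {ξ : ℕ → Ω → β} (hindep : iIndepFun ξ μ)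
    (hξ : ∀ i, StronglyMeasurable (ξ i)) (t : ℕ) :
    Indep (Filtration.natural ξ hξ t) (MeasurableSpace.comap (ξ (t + 1)) inferInstance) μ :=
  indep_of_indep_of_le_right
    (indep_iSup_of_disjoint (fun i => (hξ i).measurable.comap_le) hindep
      (S := Iic t) (T := {t + 1}) (by simp))
    (le_iSup₂ (f := fun i (_ : i ∈ ({t + 1} : Set ℕ)) => MeasurableSpace.comap (ξ i) _)
      (t + 1) rfl)

-- No measurability of `f` is needed: a non-integrable `f` has Bochner integral `0`.
lemma integral_cond_le_of_setLIntegral_enorm_le {Ω : Type*} [MeasurableSpace Ω]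
    {μ : Measure Ω} {f : Ω → ℝ} {s : Set Ω} {K : ℝ≥0∞} (hK : K ≠ ∞)
    (h : ∫⁻ ω in s, ‖f ω‖ₑ ∂μ ≤ K * μ s) : ∫ ω, f ω ∂μ[|s] ≤ K.toReal := by
  have hcond : ∫⁻ ω, ‖f ω‖ₑ ∂μ[|s] ≤ K := by
    rw [ProbabilityTheory.cond, lintegral_smul_measure]
    calc (μ s)⁻¹ * ∫⁻ ω in s, ‖f ω‖ₑ ∂μ ≤ (μ s)⁻¹ * (K * μ s) := mul_le_mul_right h _
      _ = K * ((μ s)⁻¹ * μ s) := by ring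
      _ ≤ K := mul_le_of_le_one_right' (ENNReal.inv_mul_le_one _)
  calc ∫ ω, f ω ∂μ[|s] ≤ ‖∫ ω, f ω ∂μ[|s]‖ := Real.le_norm_self _
    _ = ‖∫ ω, f ω ∂μ[|s]‖ₑ.toReal := (toReal_enorm _).symm
    _ ≤ K.toReal := ENNReal.toReal_mono hK ((enorm_integral_le_lintegral_enorm f).trans hcond)

end Independence

section Walk

variable {Ω : Type*} (ξ : ℕ → Ω → ℕ) {H : ℕ}

lemma walk_zero (ω : Ω) : walk ξ 0 ω = 1 := by simp [walk]

lemma walk_succ (t : ℕ) (ω : Ω) : walk ξ (t + 1) ω = walk ξ t ω + ξ (t + 1) ω - 1 := by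
  rw [walk, walk, Finset.sum_Icc_succ_top (by omega)]
  ring

lemma measurable_walk_natural [MeasurableSpace Ω] (hξ : ∀ i, StronglyMeasurable (ξ i))
    {t u : ℕ} (hu : u ≤ t) : Measurable[Filtration.natural ξ hξ t] (walk ξ u) := by
  refine Measurable.const_add (Finset.measurable_sum _ fun i hi => ?_) _
  refine (measurable_from_nat (f := fun k : ℕ => (k : ℤ) - 1)).comp ?_
  exact (Filtration.stronglyAdapted_natural hξ i).measurable.mono
    ((Filtration.natural ξ hξ).mono (by simp only [Finset.mem_Icc] at hi; omega)) le_rfl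

lemma walk_mem_Ioo_of_lt_hitTime (hH : 2 ≤ H) {ω : Ω} {u : ℕ} (hu : u < hitTime ξ H ω) :
    walk ξ u ω ∈ Ioo 0 (H : ℤ) := by
  induction u with
  | zero => simp only [walk_zero, mem_Ioo]; omega
  | succ u ih =>
    have hnot := Nat.notMem_of_lt_sInf hu
    have := ih (by omega)
    simp only [mem_ofPred_eq, not_and, not_or, mem_Ioo] at hnot this ⊢
    have := walk_succ ξ u ω
    omega

lemma hitTime_eq_succ {ω : Ω} {t : ℕ} (hstay : ∀ u ≤ t, walk ξ u ω ∈ Ioo 0 (H : ℤ))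
    (hexit : (H : ℤ) ≤ walk ξ (t + 1) ω) : hitTime ξ H ω = t + 1 := by
  refine le_antisymm (Nat.sInf_le ⟨by omega, Or.inl hexit⟩)
    (le_csInf ⟨t + 1, by omega, Or.inl hexit⟩ fun u ⟨_, hu⟩ => ?_)
  by_contra! hut
  have := hstay u (by omega)
  simp only [mem_Ioo] at this
  omega

end Walk

section Events

variable {Ω : Type*} (ξ : ℕ → Ω → ℕ)

def stayEvent (H t c : ℕ) : Set Ω :=
  {ω | (∀ u ≤ t, walk ξ u ω ∈ Ioo 0 (H : ℤ)) ∧ walk ξ t ω = c + 1}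

def exitAboveEvent (H t c : ℕ) : Set Ω :=
  stayEvent ξ H t c ∩ ξ (t + 1) ⁻¹' Ici (H - c)

lemma measurableSet_stayEvent [MeasurableSpace Ω] (hξ : ∀ i, StronglyMeasurable (ξ i))
    (H t c : ℕ) : MeasurableSet[Filtration.natural ξ hξ t] (stayEvent ξ H t c) := by
  have : stayEvent ξ H t c =
      (⋂ u ∈ Iic t, walk ξ u ⁻¹' Ioo 0 (H : ℤ)) ∩ walk ξ t ⁻¹' {(c : ℤ) + 1} := by
    ext ω
    simp [stayEvent]
  rw [this]
  exact MeasurableSet.inter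
    (MeasurableSet.biInter (to_countable _) fun u hu =>
      measurable_walk_natural ξ hξ hu .of_discrete)
    (measurable_walk_natural ξ hξ le_rfl .of_discrete)

lemma measurableSet_exitAboveEvent [MeasurableSpace Ω] (hmeas : ∀ i, Measurable (ξ i))
    (H t c : ℕ) : MeasurableSet (exitAboveEvent ξ H t c) :=
  ((Filtration.natural ξ _).le t _
    (measurableSet_stayEvent ξ (fun i => (hmeas i).stronglyMeasurable) H t c)).inter
    (hmeas (t + 1) .of_discrete)

variable {ξ} {H : ℕ}

lemma walk_succ_of_mem_exitAboveEvent {t c : ℕ} {ω : Ω} (h : ω ∈ exitAboveEvent ξ H t c) :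
    walk ξ (t + 1) ω = c + ξ (t + 1) ω ∧ (H : ℤ) ≤ walk ξ (t + 1) ω := by
  obtain ⟨⟨hstay, hc⟩, hexit⟩ := h
  have := (hstay t le_rfl).2
  simp only [mem_preimage, mem_Ici] at hexit
  rw [walk_succ, hc]
  omega

lemma hitTime_eq_of_mem_exitAboveEvent {t c : ℕ} {ω : Ω} (h : ω ∈ exitAboveEvent ξ H t c) :
    hitTime ξ H ω = t + 1 :=
  hitTime_eq_succ ξ h.1.1 (walk_succ_of_mem_exitAboveEvent h).2

lemma pairwise_disjoint_exitAboveEvent :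
    Pairwise (Function.onFun Disjoint fun p : ℕ × ℕ => exitAboveEvent ξ H p.1 p.2) := by
  rintro ⟨t, c⟩ ⟨t', c'⟩ hne
  refine Set.disjoint_left.2 fun ω h h' => hne ?_
  have ht : t = t' := by
    have := (hitTime_eq_of_mem_exitAboveEvent h).symm.trans (hitTime_eq_of_mem_exitAboveEvent h')
    omega
  subst ht
  have := h.1.2.symm.trans h'.1.2
  simp only [Prod.mk.injEq, true_and]
  omega

lemma setOf_le_walk_hitTime_eq_iUnion (hH : 2 ≤ H) :
    {ω | (H : ℤ) ≤ walk ξ (hitTime ξ H ω) ω} = ⋃ p : ℕ × ℕ, exitAboveEvent ξ H p.1 p.2 := by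
  ext ω
  simp only [mem_ofPred_eq, mem_iUnion, Prod.exists]
  constructor
  · intro hω
    obtain ⟨t, ht⟩ : ∃ t, hitTime ξ H ω = t + 1 := by
      refine Nat.exists_eq_add_one.2 (Nat.pos_of_ne_zero fun h0 => ?_)
      rw [h0, walk_zero] at hω
      omega
    have hstay : ∀ u ≤ t, walk ξ u ω ∈ Ioo 0 (H : ℤ) :=
      fun u hu => walk_mem_Ioo_of_lt_hitTime ξ hH (by omega)
    have hpos := (hstay t le_rfl).1
    have hstep := walk_succ ξ t ω
    rw [ht] at hω
    refine ⟨t, (walk ξ t ω).toNat - 1, ⟨hstay, by omega⟩, ?_⟩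
    simp only [mem_preimage, mem_Ici]
    omega
  · rintro ⟨t, c, h⟩
    rw [hitTime_eq_of_mem_exitAboveEvent h]
    exact (walk_succ_of_mem_exitAboveEvent h).2

lemma exitAboveEvent_eq_empty {t c : ℕ} (hc : H < c + 2) : exitAboveEvent ξ H t c = ∅ :=
  eq_empty_of_forall_notMem fun ω h => by
    have := (h.1.1 t le_rfl).2
    have := h.1.2
    omega

lemma setLIntegral_exitAboveEvent_le [MeasurableSpace Ω] {μ : Measure Ω} {n : ℕ}
    (hmeas : ∀ i, Measurable (ξ i)) (hdist : ∀ i, μ.map (ξ i) = binomialMeasure n (1 / (n : ℝ)))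
    (hindep : iIndepFun ξ μ) (t c : ℕ) :
    ∫⁻ ω in exitAboveEvent ξ H t c, ‖((walk ξ (hitTime ξ H ω) ω : ℤ) : ℝ) ^ 2‖ₑ ∂μ ≤
      ((H ^ 2 + 3 * H : ℕ) : ℝ≥0∞) * μ (exitAboveEvent ξ H t c) := by
  obtain hc | hc := lt_or_ge H (c + 2)
  · rw [exitAboveEvent_eq_empty hc]
    simp
  have hξ := fun i => (hmeas i).stronglyMeasurable
  have hsplit := fun (g : ℕ → ℝ≥0∞) =>
    (hindep.indep_natural_comap_succ hξ t).setLIntegral_inter_preimage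
      ((Filtration.natural ξ hξ).le t) (hmeas (t + 1)) (measurableSet_stayEvent ξ hξ H t c)
      (measurableSet_Ici (a := H - c)) (g := g) measurable_from_nat
  rw [hdist] at hsplit
  have htail := setLIntegral_Ici_add_sq_le (fun k (hk : H - c ≤ k) =>
    three_mul_binomialMeasure_succ_le n (k := k) (by omega)) (c := c) (by omega)
  rw [Nat.add_sub_cancel' (by omega)] at htail
  calc ∫⁻ ω in exitAboveEvent ξ H t c, ‖((walk ξ (hitTime ξ H ω) ω : ℤ) : ℝ) ^ 2‖ₑ ∂μ
      = ∫⁻ ω in exitAboveEvent ξ H t c, ((c + ξ (t + 1) ω : ℕ) : ℝ≥0∞) ^ 2 ∂μ := by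
        refine setLIntegral_congr_fun (measurableSet_exitAboveEvent ξ hmeas H t c) fun ω h => ?_
        rw [hitTime_eq_of_mem_exitAboveEvent h, (walk_succ_of_mem_exitAboveEvent h).1,
          enorm_pow]
        norm_cast
        rw [Real.enorm_natCast, Nat.cast_pow]
    _ = μ (stayEvent ξ H t c) * ∫⁻ k in Ici (H - c), ((c + k : ℕ) : ℝ≥0∞) ^ 2
          ∂binomialMeasure n (1 / n) := hsplit fun k => ((c + k : ℕ) : ℝ≥0∞) ^ 2
    _ ≤ μ (stayEvent ξ H t c) *
          (((H ^ 2 + 3 * H : ℕ) : ℝ≥0∞) * binomialMeasure n (1 / n) (Ici (H - c))) :=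
        mul_le_mul_right htail _
    _ = ((H ^ 2 + 3 * H : ℕ) : ℝ≥0∞) * μ (exitAboveEvent ξ H t c) := by
        have hμ := hsplit 1
        simp only [Pi.one_apply, setLIntegral_one] at hμ
        rw [exitAboveEvent, hμ]
        ring

end Events

theorem second_moment_at_hit_general {Ω : Type*} [MeasurableSpace Ω] (μ : Measure Ω)
    (n : ℕ)
    (ξ : ℕ → Ω → ℕ) (hmeas : ∀ i, Measurable (ξ i))
    (hdist : ∀ i, μ.map (ξ i) = binomialMeasure n (1 / (n : ℝ)))
    (hindep : iIndepFun ξ μ)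
    (H : ℕ) (hH2 : 2 ≤ H) :
    ∫ ω, ((walk ξ (hitTime ξ H ω) ω : ℤ) : ℝ) ^ 2
        ∂(μ[|{ω | (H : ℤ) ≤ walk ξ (hitTime ξ H ω) ω}]) ≤
      (H : ℝ) ^ 2 + 3 * H := by
  have hD := fun p : ℕ × ℕ => measurableSet_exitAboveEvent ξ hmeas H p.1 p.2
  have hdisj := pairwise_disjoint_exitAboveEvent (ξ := ξ) (H := H)
  refine (integral_cond_le_of_setLIntegral_enorm_le (K := ((H ^ 2 + 3 * H : ℕ) : ℝ≥0∞))
    (ENNReal.natCast_ne_top _) ?_).trans_eq (by rw [ENNReal.toReal_natCast]; push_cast; ring)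
  rw [setOf_le_walk_hitTime_eq_iUnion hH2, lintegral_iUnion hD hdisj, measure_iUnion hdisj hD,
    ← ENNReal.tsum_mul_left]
  exact ENNReal.tsum_le_tsum fun p => setLIntegral_exitAboveEvent_le hmeas hdist hindep p.1 p.2

/-- **Inequality (3), Nachmias–Peres.** For the Bin(n,1/n) walk and `2 ≤ H ≤ n`,
`E[S_γ² | S_γ ≥ H] ≤ H² + 3H`. -/
theorem second_moment_at_hit {Ω : Type*} [MeasurableSpace Ω] (μ : Measure Ω)
    [IsProbabilityMeasure μ] (n : ℕ) (hn : 2 ≤ n)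
    (ξ : ℕ → Ω → ℕ) (hmeas : ∀ i, Measurable (ξ i))
    (hdist : ∀ i, μ.map (ξ i) = binomialMeasure n (1 / (n : ℝ)))
    (hindep : iIndepFun ξ μ)
    (H : ℕ) (hH2 : 2 ≤ H) (hHn : H ≤ n) :
    ∫ ω, ((walk ξ (hitTime ξ H ω) ω : ℤ) : ℝ) ^ 2
        ∂(μ[|{ω | (H : ℤ) ≤ walk ξ (hitTime ξ H ω) ω}]) ≤
      (H : ℝ) ^ 2 + 3 * H :=
  second_moment_at_hit_general μ n ξ hmeas hdist hindep H hH2
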